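/- arXiv:2211.04296 — 5 statements merged into one kernel-verified Lean document; each statement's English description precedes it below -/
import Mathlib

section
/- For each i ∈ {1,2} and each integer n ≥ 1, the polynomial (−1)^{n+i} b^{(i)}_n(q) ∈ ℤ[q] has all coefficients nonnegative (i.e., each b^{(i)}_n is sign coherent with sign (−1)^{n+i}). -/
/-!
Twisting by the sign, `c n = (-1)^(n+i) * b n` satisfies `c (n+2) = X^(n+2) * c n + X^(n+1) * c (n+1)`,
a recurrence with nonnegative coefficients. Since `c 1` and `c 2` are `X, 0` (for `i = 1`) or
`0, X^2` (for `i = 2`), nonnegativity of coefficients propagates to every `c n` with `n ≥ 1`.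
-/

open Polynomial

namespace Polynomial

def CoeffNonneg {R : Type*} [Semiring R] [LE R] (p : R[X]) : Prop :=
  ∀ m, 0 ≤ p.coeff m

section

variable {R : Type*} [Semiring R] [PartialOrder R]

lemma CoeffNonneg.zero : CoeffNonneg (0 : R[X]) := fun m => by simp

lemma CoeffNonneg.add [IsOrderedRing R] {p r : R[X]} (hp : CoeffNonneg p) (hr : CoeffNonneg r) :
    CoeffNonneg (p + r) := fun m => by
  rw [coeff_add]
  exact add_nonneg (hp m) (hr m)

lemma CoeffNonneg.X_pow_mul {p : R[X]} (hp : CoeffNonneg p) (k : ℕ) :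
    CoeffNonneg (X ^ k * p) := fun m => by
  rw [coeff_X_pow_mul']
  split_ifs
  exacts [hp _, le_rfl]

lemma coeffNonneg_X_pow [IsOrderedRing R] (k : ℕ) : CoeffNonneg (X ^ k : R[X]) := fun m => by
  rw [coeff_X_pow]
  split_ifs
  exacts [zero_le_one, le_rfl]

lemma CoeffNonneg.of_recurrence [IsOrderedRing R] {c : ℕ → R[X]} (h1 : CoeffNonneg (c 1)) (h2 : CoeffNonneg (c 2))
    (hrec : ∀ n, c (n + 2) = X ^ (n + 2) * c n + X ^ (n + 1) * c (n + 1)) :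
    ∀ n, 1 ≤ n → CoeffNonneg (c n) := by
  have pair : ∀ n, CoeffNonneg (c (n + 1)) ∧ CoeffNonneg (c (n + 2)) := by
    intro n
    induction n with
    | zero => exact ⟨h1, h2⟩
    | succ n ih =>
      refine ⟨ih.2, ?_⟩
      rw [hrec (n + 1)]
      exact (ih.1.X_pow_mul _).add (ih.2.X_pow_mul _)
  intro n hn
  obtain ⟨k, rfl⟩ := Nat.exists_eq_add_of_le' hn
  exact (pair k).1

end

lemma neg_one_pow_mul_recurrence {R : Type*} [CommRing R] (i : ℕ) {b : ℕ → R[X]}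
    (hrec : ∀ n, b (n + 2) = X ^ (n + 2) * b n - X ^ (n + 1) * b (n + 1)) (n : ℕ) :
    (-1) ^ (n + 2 + i) * b (n + 2) =
      X ^ (n + 2) * ((-1) ^ (n + i) * b n) + X ^ (n + 1) * ((-1) ^ (n + 1 + i) * b (n + 1)) := by
  rw [hrec, show n + 2 + i = n + i + 2 by omega, show n + 1 + i = n + i + 1 by omega]
  ring

end Polynomial

/-- **Sign coherence of the numerators `b^{(i)}_n`.**
For `i ∈ {1,2}` and the polynomial sequence `b = b^{(i)}` defined by `b 0 = 1`,
`b^{(1)} 1 = q`, `b^{(2)} 1 = 0` and `b (n+2) = q^(n+2) * b n - q^(n+1) * b (n+1)`,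
the polynomial `(-1)^(n+i) * b n` has all coefficients nonnegative for every `n ≥ 1`. -/
theorem b_sign_coherent
    (i : ℕ) (hi : i = 1 ∨ i = 2)
    (b : ℕ → Polynomial ℤ)
    (hb0 : b 0 = 1)
    (hb1 : b 1 = if i = 1 then X else 0)
    (hrec : ∀ n : ℕ, b (n + 2) = X ^ (n + 2) * b n - X ^ (n + 1) * b (n + 1)) :
    ∀ n : ℕ, 1 ≤ n → ∀ m : ℕ, 0 ≤ ((-1 : Polynomial ℤ) ^ (n + i) * b n).coeff m := by
  have hb2 : b 2 = X ^ 2 - X * b 1 := by simpa [hb0] using hrec 0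
  have base : CoeffNonneg ((-1) ^ (1 + i) * b 1) ∧ CoeffNonneg ((-1) ^ (2 + i) * b 2) := by
    rcases hi with rfl | rfl
    · have hb2' : b 2 = 0 := by rw [hb2, hb1]; simp [sq]
      norm_num [hb1, hb2']
      exact ⟨by simpa using coeffNonneg_X_pow (R := ℤ) 1, CoeffNonneg.zero⟩
    · norm_num [hb1, hb2]
      exact ⟨CoeffNonneg.zero, coeffNonneg_X_pow 2⟩
  exact CoeffNonneg.of_recurrence (c := fun n => (-1) ^ (n + i) * b n) base.1 base.2
    (neg_one_pow_mul_recurrence i hrec)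
end

section
/- For each i ∈ {1,2} and each integer n > 2, the evaluation of b^{(i)}_n at q = 1 satisfies (−1)^{n+i} b^{(i)}_n(1) = F_{n−3+i}, where F_m denotes the Fibonacci numbers with F_1 = F_2 = 1 and F_{m+2} = F_{m+1} + F_m. In particular, (−1)^{n+i} b^{(i)}_n(1) is a Fibonacci number for all n > 2. -/
/-!
At `q = 1` the recurrence becomes `c (n + 2) = c n - c (n + 1)`, so the signed values
`(-1) ^ n * c n` satisfy the Fibonacci recurrence; the values at `n = 3, 4` then identify them
with a shifted Fibonacci sequence.
-/

open Polynomial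

theorem Nat.cast_fib_add_of_add_two {R : Type*} [AddMonoidWithOne R] {d : ℕ → R}
    (hd : ∀ n, d (n + 2) = d n + d (n + 1)) {j k : ℕ}
    (h0 : d k = Nat.fib j) (h1 : d (k + 1) = Nat.fib (j + 1)) :
    ∀ n, d (k + n) = Nat.fib (j + n) := by
  intro n
  induction n using Nat.twoStepInduction with
  | zero => exact h0
  | one => exact h1
  | more n ih₀ ih₁ =>
    rw [← add_assoc, hd, ih₀, add_assoc, ih₁, ← add_assoc j n 2, Nat.fib_add_two, Nat.cast_add,
      add_assoc]

theorem neg_one_pow_mul_add_two_of_sub {R : Type*} [CommRing R] {c : ℕ → R}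
    (hc : ∀ n, c (n + 2) = c n - c (n + 1)) (s n : ℕ) :
    (-1) ^ (n + 2 + s) * c (n + 2) =
      (-1) ^ (n + s) * c n + (-1) ^ (n + 1 + s) * c (n + 1) := by
  rw [hc, show n + 2 + s = n + s + 2 by omega, show n + 1 + s = n + s + 1 by omega]
  ring

/-- **Fibonacci evaluation of the numerators `b^{(i)}_n`.**
For `i ∈ {1,2}` and the polynomial sequence `b = b^{(i)}` defined by `b 0 = 1`,
`b^{(1)} 1 = q`, `b^{(2)} 1 = 0` and `b (n+2) = q^(n+2) * b n - q^(n+1) * b (n+1)`,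
we have `(-1)^(n+i) * (b n)(1) = F (n - 3 + i)` for every `n > 2`, where `F` is the
Fibonacci sequence with `F 1 = F 2 = 1` (Mathlib's `Nat.fib`). -/
theorem b_eval_one_fibonacci
    (i : ℕ) (hi : i = 1 ∨ i = 2)
    (b : ℕ → Polynomial ℤ)
    (hb0 : b 0 = 1)
    (hb1 : b 1 = if i = 1 then X else 0)
    (hrec : ∀ n : ℕ, b (n + 2) = X ^ (n + 2) * b n - X ^ (n + 1) * b (n + 1)) :
    ∀ n : ℕ, 2 < n → (-1 : ℤ) ^ (n + i) * (b n).eval 1 = Nat.fib (n - 3 + i) := by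
  have heval : ∀ n, (b (n + 2)).eval 1 = (b n).eval 1 - (b (n + 1)).eval 1 := by
    simp [hrec]
  have h3 : (b 3).eval 1 = 2 * (b 1).eval 1 - 1 := by
    simp only [heval, hb0, eval_one]; ring
  have h4 : (b 4).eval 1 = 2 - 3 * (b 1).eval 1 := by
    simp only [heval, hb0, eval_one]; ring
  have hd3 : (-1 : ℤ) ^ (3 + i) * (b 3).eval 1 = Nat.fib i := by
    rcases hi with rfl | rfl <;> norm_num [h3, hb1]
  have hd4 : (-1 : ℤ) ^ (3 + 1 + i) * (b (3 + 1)).eval 1 = Nat.fib (i + 1) := by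
    rcases hi with rfl | rfl <;> norm_num [h4, hb1]
  have hfib := Nat.cast_fib_add_of_add_two (d := fun n ↦ (-1 : ℤ) ^ (n + i) * (b n).eval 1)
    (neg_one_pow_mul_add_two_of_sub (c := fun n ↦ (b n).eval 1) heval i) hd3 hd4
  intro n hn
  obtain ⟨m, rfl⟩ : ∃ m, n = 3 + m := ⟨n - 3, by omega⟩
  rw [hfib m, Nat.add_sub_cancel_left, add_comm m]
end

section
/- Let q be a complex number with 0 < |q| < 1 and let J : ℂ → ℂ be an entire function satisfying q·J(x) = (1 + xq)(1 + q − xq + x^2 q^3)·J(xq) − (1 + xq^2)(1 − x^2 q^2)·J(xq^2) for all x ∈ ℂ. Define K(x) = J(x)/∏_{k≥1}(1 + x q^k) for all x ∈ ℂ not of the form −q^{−k} with k ≥ 1 (the infinite product converges absolutely and is nonzero there). Then q·K(x) = (1 + q − xq + x^2 q^3)·K(xq) − (1 − xq)·K(xq^2) for all such x. -/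
/-!
Write `P(x) = ∏_{k ≥ 1} (1 + x qᵏ)`. Peeling off the first factor gives
`P(x) = (1 + xq) P(xq) = (1 + xq)(1 + xq²) P(xq²)`, and `P(x) ≠ 0` away from the points
`-q⁻ᵏ` because the product converges absolutely. Dividing the equation for `J` by `P(x)` and
cancelling `1 - x²q² = (1 - xq)(1 + xq)` gives the equation for `K`.
-/

section QProduct

variable {𝕜 : Type*} [NormedField 𝕜] {q : 𝕜}

lemma summable_norm_mul_pow_succ (hq : ‖q‖ < 1) (x : 𝕜) :
    Summable fun k : ℕ => ‖x * q ^ (k + 1)‖ := by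
  simp_rw [norm_mul, norm_pow]
  exact ((summable_geometric_of_lt_one (norm_nonneg q) hq).comp_injective
    (add_left_injective 1)).mul_left ‖x‖

lemma one_add_mul_ne_zero_of_ne_neg_inv {x y : 𝕜} (h : x ≠ -y⁻¹) : 1 + x * y ≠ 0 := by
  intro h0
  refine h (neg_eq_iff_eq_neg.mp (eq_inv_of_mul_eq_one_left ?_))
  linear_combination -h0

variable [CompleteSpace 𝕜]

lemma tprod_one_add_mul_pow_succ (hq : ‖q‖ < 1) (x : 𝕜) :
    ∏' k : ℕ, (1 + x * q ^ (k + 1)) = (1 + x * q) * ∏' k : ℕ, (1 + x * q * q ^ (k + 1)) := by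
  have htail : Multipliable fun k : ℕ => 1 + x * q * q ^ (k + 1) :=
    multipliable_one_add_of_summable (summable_norm_mul_pow_succ hq (x * q))
  rw [tprod_eq_zero_mul' (f := fun k : ℕ => 1 + x * q ^ (k + 1))]
  · simp only [zero_add, pow_one, pow_succ' q (_ + 1), mul_assoc]
  · simpa only [pow_succ' q (_ + 1), mul_assoc] using htail

lemma tprod_one_add_mul_pow_succ_ne_zero (hq : ‖q‖ < 1) {x : 𝕜}
    (hx : ∀ k : ℕ, x ≠ -(q ^ (k + 1))⁻¹) :
    ∏' k : ℕ, (1 + x * q ^ (k + 1)) ≠ 0 :=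
  tprod_one_add_ne_zero_of_summable (fun k => one_add_mul_ne_zero_of_ne_neg_inv (hx k))
    (summable_norm_mul_pow_succ hq x)

end QProduct

theorem qdif_to_qdif2_general
    (q : ℂ) (hq1 : ‖q‖ < 1)
    (J : ℂ → ℂ)
    (hfe : ∀ x : ℂ, q * J x =
      (1 + x * q) * (1 + q - x * q + x ^ 2 * q ^ 3) * J (x * q)
      - (1 + x * q ^ 2) * (1 - x ^ 2 * q ^ 2) * J (x * q ^ 2))
    (K : ℂ → ℂ)
    (hK : ∀ x : ℂ, K x = J x / ∏' k : ℕ, (1 + x * q ^ (k + 1))) :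
    ∀ x : ℂ, (∀ k : ℕ, x ≠ -(q ^ (k + 1))⁻¹) →
      q * K x = (1 + q - x * q + x ^ 2 * q ^ 3) * K (x * q)
        - (1 - x * q) * K (x * q ^ 2) := by
  intro x hx
  have hP₁ : ∏' k : ℕ, (1 + x * q * q ^ (k + 1)) =
      (1 + x * q ^ 2) * ∏' k : ℕ, (1 + x * q ^ 2 * q ^ (k + 1)) := by
    rw [tprod_one_add_mul_pow_succ hq1 (x * q), mul_assoc x q q, ← sq]
  have hP₀ := tprod_one_add_mul_pow_succ_ne_zero hq1 hx
  rw [tprod_one_add_mul_pow_succ hq1 x, hP₁] at hP₀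
  rw [hK x, hK (x * q), hK (x * q ^ 2), tprod_one_add_mul_pow_succ hq1 x, hP₁]
  have hJ := hfe x
  rw [show 1 - x ^ 2 * q ^ 2 = (1 - x * q) * (1 + x * q) by ring] at hJ
  generalize 1 + x * q = a, 1 + x * q ^ 2 = b, ∏' k : ℕ, (1 + x * q ^ 2 * q ^ (k + 1)) = P,
    J (x * q) = J₁, J (x * q ^ 2) = J₂ at hJ hP₀ ⊢
  obtain ⟨ha, hb, hP⟩ : a ≠ 0 ∧ b ≠ 0 ∧ P ≠ 0 := by
    simpa only [ne_eq, mul_eq_zero, not_or] using hP₀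
  field_simp
  linear_combination hJ

/-- **From \eqref{qdif} to \eqref{qdif2}.**
Let `0 < |q| < 1` and let `J : ℂ → ℂ` be an entire function satisfying
`q·J(x) = (1+xq)(1+q-xq+x²q³)·J(xq) - (1+xq²)(1-x²q²)·J(xq²)` for all `x`.
Let `K(x) = J(x) / ∏_{k≥1} (1 + x qᵏ)`.  Then for every `x` which is not of the form
`-q^{-k}` with `k ≥ 1` (i.e. not a zero of the infinite product) one has
`q·K(x) = (1+q-xq+x²q³)·K(xq) - (1-xq)·K(xq²)`. -/
theorem qdif_to_qdif2
    (q : ℂ) (hq0 : 0 < ‖q‖) (hq1 : ‖q‖ < 1)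
    (J : ℂ → ℂ) (hJ : Differentiable ℂ J)
    (hfe : ∀ x : ℂ, q * J x =
      (1 + x * q) * (1 + q - x * q + x ^ 2 * q ^ 3) * J (x * q)
      - (1 + x * q ^ 2) * (1 - x ^ 2 * q ^ 2) * J (x * q ^ 2))
    (K : ℂ → ℂ)
    (hK : ∀ x : ℂ, K x = J x / ∏' k : ℕ, (1 + x * q ^ (k + 1))) :
    ∀ x : ℂ, (∀ k : ℕ, x ≠ -(q ^ (k + 1))⁻¹) →
      q * K x = (1 + q - x * q + x ^ 2 * q ^ 3) * K (x * q)
        - (1 - x * q) * K (x * q ^ 2) :=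
  qdif_to_qdif2_general q hq1 J hfe K hK
end

section
/- Let q, x be complex numbers with |q| < 1 and let F_1(x,q) = ∑_{λ ∈ STR} x^{ℓ(λ)} q^{|λ|_1}, the sum (which converges absolutely) running over all strict partitions λ. Then q^3 F_1(x,q) = (1 + q^3 − x q^3 + x q^6 + x^2 q^7 + x^2 q^8) F_1(x q^3, q) − (1 − x q^3)(1 + x q^6)(1 − x^2 q^9) F_1(x q^6, q). -/
/-- A strict partition: a strictly decreasing list of positive integers
(the empty partition is allowed). -/
structure StrictPartition where
  parts : List ℕ
  sorted : parts.Pairwise (· > ·)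
  pos : ∀ p ∈ parts, 0 < p

namespace StrictPartition

/-- The number of parts (rows) of a strict partition. -/
def length (l : StrictPartition) : ℕ := l.parts.length

/-- The number of boxes `(j+1, k)` with `1 ≤ k ≤ p` in row `j+1` (`j` is 0-indexed)
whose residue `k - (j+1)` is congruent to `i` modulo `2`. -/
def rowResidueCount (i j p : ℕ) : ℕ :=
  ((Finset.Icc 1 p).filter fun k => (k + j + 1 + i) % 2 = 0).card

/-- `|λ|_i`: the number of boxes of `λ`, counting twice each box whose residue
`(column) - (row)` is congruent to `i` modulo `2`. -/
def wt (i : ℕ) (l : StrictPartition) : ℕ :=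
  l.parts.sum + ∑ j ∈ Finset.range l.parts.length, rowResidueCount i j (l.parts.getD j 0)

end StrictPartition

/-!
Removing the parts `1` and `2` of a strict partition and subtracting `2` from the other parts is
a bijection from `STR` onto `STR × 𝒫{1, 2}`. Every row of the reduced partition `ν` loses one box
of each residue, i.e. `3` from `|λ|₁`, and the small parts are single rows whose contribution is
explicit, except that the residue of a part `1` depends on the parity of its row, hence of `ℓ(ν)`.
Separating the two parities with `F₁(±x q³, q)` gives
`2 F₁(x) = (1 + xq³)(2 + xq(1+q)) F₁(xq³) + xq(1-q)(1-xq³) F₁(-xq³)`,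
and the three instances of this at `x`, `xq³`, `-xq³` eliminate `F₁(-xq³)` and `F₁(-xq⁶)`.
-/

namespace StrictPartition

lemma nodup_parts (l : StrictPartition) : l.parts.Nodup :=
  l.sorted.imp ne_of_gt

lemma ext_of_mem_iff {l₁ l₂ : StrictPartition} (h : ∀ a, a ∈ l₁.parts ↔ a ∈ l₂.parts) :
    l₁ = l₂ := by
  obtain ⟨p₁, s₁, _⟩ := l₁
  obtain ⟨p₂, s₂, _⟩ := l₂
  have : p₁ = p₂ := List.Perm.eq_of_pairwise' s₁ s₂
    ((List.perm_ext_iff_of_nodup (s₁.imp ne_of_gt) (s₂.imp ne_of_gt)).2 h)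
  subst this
  rfl

lemma toFinset_parts_injective :
    Function.Injective fun l : StrictPartition => l.parts.toFinset := fun _ _ h =>
  ext_of_mem_iff fun a => by simpa using congrArg (a ∈ ·) h

def smallParts (b₂ b₁ : Bool) : List ℕ := (if b₂ then [2] else []) ++ (if b₁ then [1] else [])

lemma mem_smallParts {b₂ b₁ : Bool} {a : ℕ} :
    a ∈ smallParts b₂ b₁ ↔ a = 2 ∧ b₂ ∨ a = 1 ∧ b₁ := by
  cases b₂ <;> cases b₁ <;> simp [smallParts]

lemma smallParts_pairwise (b₂ b₁ : Bool) : (smallParts b₂ b₁).Pairwise (· > ·) := by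
  cases b₂ <;> cases b₁ <;> simp [smallParts]

def raise (ν : StrictPartition) (b₂ b₁ : Bool) : StrictPartition where
  parts := ν.parts.map (· + 2) ++ smallParts b₂ b₁
  sorted := by
    refine List.pairwise_append.2 ⟨List.pairwise_map.2 (ν.sorted.imp (by omega)),
      smallParts_pairwise b₂ b₁, ?_⟩
    simp only [List.mem_map, mem_smallParts]
    rintro _ ⟨p, hp, rfl⟩ b (⟨rfl, -⟩ | ⟨rfl, -⟩) <;> linarith [ν.pos p hp]
  pos := by
    simp only [List.mem_append, List.mem_map, mem_smallParts]
    rintro _ (⟨p, -, rfl⟩ | ⟨rfl, -⟩ | ⟨rfl, -⟩) <;> omega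

lemma mem_raise {ν : StrictPartition} {b₂ b₁ : Bool} {a : ℕ} :
    a ∈ (raise ν b₂ b₁).parts ↔ 2 < a ∧ a - 2 ∈ ν.parts ∨ a = 2 ∧ b₂ ∨ a = 1 ∧ b₁ := by
  simp only [raise, List.mem_append, List.mem_map, mem_smallParts]
  constructor
  · rintro (⟨p, hp, rfl⟩ | h)
    · exact .inl ⟨by linarith [ν.pos p hp], by simpa using hp⟩
    · exact .inr h
  · rintro (⟨ha, hp⟩ | h)
    · exact .inl ⟨a - 2, hp, by omega⟩
    · exact .inr h

lemma length_raise (ν : StrictPartition) (b₂ b₁ : Bool) :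
    (raise ν b₂ b₁).length = ν.length + b₂.toNat + b₁.toNat := by
  cases b₂ <;> cases b₁ <;> simp [raise, smallParts, length, add_assoc]

def lower (l : StrictPartition) : StrictPartition where
  parts := (l.parts.filter (2 < ·)).map (· - 2)
  sorted := List.pairwise_map.2 <| (l.sorted.sublist List.filter_sublist).imp_of_mem
    fun ha hb hab => by
      simp only [List.mem_filter, decide_eq_true_eq] at ha hb
      exact Nat.sub_lt_sub_right hb.2.le hab
  pos := by
    simp only [List.mem_map, List.mem_filter, decide_eq_true_eq]
    rintro _ ⟨p, ⟨-, hp⟩, rfl⟩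
    omega

lemma mem_lower {l : StrictPartition} {a : ℕ} :
    a ∈ (lower l).parts ↔ 0 < a ∧ a + 2 ∈ l.parts := by
  simp only [lower, List.mem_map, List.mem_filter, decide_eq_true_eq]
  constructor
  · rintro ⟨p, ⟨hp, h2⟩, rfl⟩
    exact ⟨by omega, by rwa [Nat.sub_add_cancel h2.le]⟩
  · exact fun ⟨ha, h⟩ => ⟨a + 2, ⟨h, by omega⟩, by omega⟩

def raiseEquiv : StrictPartition × Bool × Bool ≃ StrictPartition where
  toFun z := raise z.1 z.2.1 z.2.2
  invFun l := (lower l, decide (2 ∈ l.parts), decide (1 ∈ l.parts))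
  left_inv := by
    rintro ⟨ν, b₂, b₁⟩
    refine Prod.ext (ext_of_mem_iff fun a => ?_) (Prod.ext ?_ ?_)
    · have := ν.pos a
      simp only [mem_lower, mem_raise, Nat.add_sub_cancel]
      grind
    · cases b₂ <;> simp [mem_raise]
    · cases b₁ <;> simp [mem_raise]
  right_inv l := ext_of_mem_iff fun a => by
    have := l.pos a
    simp only [mem_raise, mem_lower, decide_eq_true_eq]
    grind

lemma rowResidueCount_eq (i j p : ℕ) : rowResidueCount i j p = (p + 1 - (j + i) % 2) / 2 := by
  induction p with
  | zero => simp [rowResidueCount]; omega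
  | succ p ih =>
    unfold rowResidueCount at ih ⊢
    rw [← Finset.insert_Icc_right_eq_Icc_add_one (by omega), Finset.filter_insert]
    split_ifs
    · rw [Finset.card_insert_of_notMem (by simp), ih]
      omega
    · rw [ih]
      omega

def wtList (i : ℕ) (l : List ℕ) : ℕ :=
  l.sum + ∑ j ∈ Finset.range l.length, rowResidueCount i j (l.getD j 0)

lemma wt_eq_wtList (i : ℕ) (l : StrictPartition) : l.wt i = wtList i l.parts := rfl

lemma wtList_append (i : ℕ) (l t : List ℕ) :
    wtList i (l ++ t) = wtList i l + t.sum +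
      ∑ j ∈ Finset.range t.length, rowResidueCount i (l.length + j) (t.getD j 0) := by
  have hl : ∀ j ∈ Finset.range l.length,
      rowResidueCount i j ((l ++ t).getD j 0) = rowResidueCount i j (l.getD j 0) := by
    intro j hj
    rw [List.getD_append _ _ _ _ (Finset.mem_range.1 hj)]
  have ht : ∀ j ∈ Finset.range t.length,
      rowResidueCount i (l.length + j) ((l ++ t).getD (l.length + j) 0) =
        rowResidueCount i (l.length + j) (t.getD j 0) := by
    intro j _
    rw [List.getD_append_right _ _ _ _ (by omega), Nat.add_sub_cancel_left]
  rw [wtList, wtList, List.length_append, Finset.sum_range_add, Finset.sum_congr rfl hl,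
    Finset.sum_congr rfl ht, List.sum_append]
  ring

lemma wtList_map_add_two (i : ℕ) (l : List ℕ) :
    wtList i (l.map (· + 2)) = wtList i l + 3 * l.length := by
  have hrow : ∀ j ∈ Finset.range l.length,
      rowResidueCount i j ((l.map (· + 2)).getD j 0) = rowResidueCount i j (l.getD j 0) + 1 := by
    intro j hj
    rw [List.getD_eq_getElem _ _ (by simpa using hj), List.getD_eq_getElem _ _ (by simpa using hj),
      List.getElem_map, rowResidueCount_eq, rowResidueCount_eq]
    omega
  have hsum : (l.map (· + 2)).sum = l.sum + 2 * l.length := by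
    induction l with
    | nil => rfl
    | cons a l ih => simp; ring
  rw [wtList, wtList, List.length_map, Finset.sum_congr rfl hrow, Finset.sum_add_distrib, hsum]
  simp only [Finset.sum_const, Finset.card_range, smul_eq_mul, mul_one]
  ring

lemma wt_raise (i : ℕ) (ν : StrictPartition) (b₂ b₁ : Bool) :
    (raise ν b₂ b₁).wt i = ν.wt i + 3 * ν.length + 3 * b₂.toNat +
      b₁.toNat * (1 + (ν.length + b₂.toNat + i + 1) % 2) := by
  rw [wt_eq_wtList, wt_eq_wtList, raise, wtList_append, wtList_map_add_two, List.length_map]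
  cases b₂ <;> cases b₁ <;>
    simp [smallParts, rowResidueCount_eq, length, Finset.sum_range_succ] <;> omega

/-- Since `|λ|_i ≥ |λ|`, each term is dominated by `∏_{p ∈ λ} M rᵖ` with `M = max 1 ‖x‖`,
`r = ‖q‖`, and these products are summable over all finite sets of parts. -/
lemma summable_norm_pow_mul_pow (i : ℕ) {q : ℂ} (x : ℂ) (hq : ‖q‖ < 1) :
    Summable fun l : StrictPartition => ‖x ^ l.length * q ^ l.wt i‖ := by
  set M := max 1 ‖x‖
  have hM : 0 ≤ M := zero_le_one.trans (le_max_left _ _)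
  have hprod : Summable fun l : StrictPartition => ∏ p ∈ l.parts.toFinset, M * ‖q‖ ^ p :=
    (summable_finsetProd_of_summable_nonneg (fun p => by positivity)
      ((summable_geometric_of_lt_one (norm_nonneg q) hq).mul_left M)).comp_injective
      toFinset_parts_injective
  refine hprod.of_nonneg_of_le (fun _ => norm_nonneg _) fun l => ?_
  rw [Finset.prod_mul_distrib, Finset.prod_const, Finset.prod_pow_eq_pow_sum,
    List.toFinset_card_of_nodup l.nodup_parts, List.sum_toFinset _ l.nodup_parts, List.map_id',
    norm_mul, norm_pow, norm_pow]
  exact mul_le_mul (pow_le_pow_left₀ (norm_nonneg x) (le_max_right _ _) _)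
    (pow_le_pow_of_le_one (norm_nonneg q) hq.le (Nat.le_add_right _ _)) (by positivity)
    (by positivity)

noncomputable def F₁ (x q : ℂ) : ℂ := ∑' l : StrictPartition, x ^ l.length * q ^ l.wt 1

lemma tsum_eq_tsum_sum_raise {α : Type*} [AddCommMonoid α] [TopologicalSpace α]
    [ContinuousAdd α] [T3Space α] (f : StrictPartition → α) (hf : Summable f) :
    ∑' l, f l = ∑' ν, ∑ b : Bool × Bool, f (raise ν b.1 b.2) := by
  rw [← raiseEquiv.tsum_eq]
  exact (Summable.tsum_prod' (f := fun z => f (raiseEquiv z)) (raiseEquiv.summable_iff.2 hf)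
    fun _ => .of_finite).trans (tsum_congr fun ν => tsum_fintype _)

lemma sum_raise_pow_mul_pow {R : Type*} [CommRing R] (x q : R) (ν : StrictPartition) :
    2 * ∑ b : Bool × Bool, x ^ (raise ν b.1 b.2).length * q ^ (raise ν b.1 b.2).wt 1 =
      (1 + x * q ^ 3) * (2 + x * q * (1 + q)) * ((x * q ^ 3) ^ ν.length * q ^ ν.wt 1) +
      x * q * (1 - q) * (1 - x * q ^ 3) * ((-(x * q ^ 3)) ^ ν.length * q ^ ν.wt 1) := by
  simp only [Fintype.sum_prod_type, Fintype.sum_bool, length_raise, wt_raise, Bool.toNat_true,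
    Bool.toNat_false]
  rcases Nat.even_or_odd ν.length with h | h
  · have h₀ : (ν.length + 0 + 1 + 1) % 2 = 0 := by have := Nat.even_iff.1 h; omega
    have h₁ : (ν.length + 1 + 1 + 1) % 2 = 1 := by have := Nat.even_iff.1 h; omega
    rw [h.neg_pow, h₀, h₁]
    ring
  · have h₀ : (ν.length + 0 + 1 + 1) % 2 = 1 := by have := Nat.odd_iff.1 h; omega
    have h₁ : (ν.length + 1 + 1 + 1) % 2 = 0 := by have := Nat.odd_iff.1 h; omega
    rw [h.neg_pow, h₀, h₁]
    ring

lemma two_mul_F₁ {q : ℂ} (x : ℂ) (hq : ‖q‖ < 1) :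
    2 * F₁ x q = (1 + x * q ^ 3) * (2 + x * q * (1 + q)) * F₁ (x * q ^ 3) q +
      x * q * (1 - q) * (1 - x * q ^ 3) * F₁ (-(x * q ^ 3)) q := by
  have hs (y : ℂ) : Summable fun l : StrictPartition => y ^ l.length * q ^ l.wt 1 :=
    .of_norm (summable_norm_pow_mul_pow 1 y hq)
  rw [F₁, F₁, F₁, tsum_eq_tsum_sum_raise _ (hs x), ← tsum_mul_left, ← tsum_mul_left,
    ← tsum_mul_left, ← Summable.tsum_add ((hs _).mul_left _) ((hs _).mul_left _)]
  exact tsum_congr (sum_raise_pow_mul_pow x q)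

lemma qdifference_F₁ {q : ℂ} (x : ℂ) (hq : ‖q‖ < 1) :
    q ^ 3 * F₁ x q =
      (1 + q ^ 3 - x * q ^ 3 + x * q ^ 6 + x ^ 2 * q ^ 7 + x ^ 2 * q ^ 8) * F₁ (x * q ^ 3) q
      - (1 - x * q ^ 3) * (1 + x * q ^ 6) * (1 - x ^ 2 * q ^ 9) * F₁ (x * q ^ 6) q := by
  have h₀ := two_mul_F₁ x hq
  have h₃ := two_mul_F₁ (x * q ^ 3) hq
  have h₃' := two_mul_F₁ (-(x * q ^ 3)) hq
  rw [show x * q ^ 3 * q ^ 3 = x * q ^ 6 by ring] at h₃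
  rw [show -(x * q ^ 3) * q ^ 3 = -(x * q ^ 6) by ring, neg_neg] at h₃'
  linear_combination q ^ 3 / 2 * h₀
    + (q ^ 3 / 2 * ((1 + x * q ^ 3) * (2 + x * q * (1 + q))) -
      (1 + q ^ 3 - x * q ^ 3 + x * q ^ 6 + x ^ 2 * q ^ 7 + x ^ 2 * q ^ 8)) / 2 * h₃
    + q ^ 3 / 4 * (x * q * (1 - q) * (1 - x * q ^ 3)) * h₃'

end StrictPartition

/-- **The `q`-difference equation \eqref{qd2} for `F₁(x,q) = ∑_{λ ∈ STR} x^{ℓ(λ)} q^{|λ|₁}`.**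
For `|q| < 1` the sum converges absolutely and
`q³ F₁(x,q) = (1+q³-xq³+xq⁶+x²q⁷+x²q⁸) F₁(xq³,q) - (1-xq³)(1+xq⁶)(1-x²q⁹) F₁(xq⁶,q)`. -/
theorem qdifference_F_one
    (q x : ℂ) (hq : ‖q‖ < 1) :
    Summable (fun p : StrictPartition => ‖x ^ p.length * q ^ p.wt 1‖) ∧
    q ^ 3 * (∑' p : StrictPartition, x ^ p.length * q ^ p.wt 1) =
      (1 + q ^ 3 - x * q ^ 3 + x * q ^ 6 + x ^ 2 * q ^ 7 + x ^ 2 * q ^ 8) *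
        (∑' p : StrictPartition, (x * q ^ 3) ^ p.length * q ^ p.wt 1)
      - (1 - x * q ^ 3) * (1 + x * q ^ 6) * (1 - x ^ 2 * q ^ 9) *
        (∑' p : StrictPartition, (x * q ^ 6) ^ p.length * q ^ p.wt 1) :=
  ⟨StrictPartition.summable_norm_pow_mul_pow 1 x hq, StrictPartition.qdifference_F₁ x hq⟩
end

section
/- Let q be a complex number with |q| < 1. For every integer n ≥ 0, the series ∑_{λ ∈ STR, ℓ(λ) = n} q^{|λ|_2} over all strict partitions with exactly n parts converges absolutely and equals c^{(2)}_n(q)/(q^3;q^3)_n, where c^{(2)}_n is the polynomial sequence defined in the context with i = 2. -/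
open Polynomial

theorem hasSum_geometric_mul_of_summable_norm {𝕜 α : Type*} [NormedDivisionRing 𝕜]
    [CompleteSpace 𝕜] {r s : 𝕜} {f : α → 𝕜} (hr : ‖r‖ < 1) (hf : Summable fun a => ‖f a‖)
    (hs : HasSum f s) :
    (Summable fun x : ℕ × α => ‖r ^ x.1 * f x.2‖) ∧
      HasSum (fun x : ℕ × α => r ^ x.1 * f x.2) ((1 - r)⁻¹ * s) := by
  have hg : Summable fun k : ℕ => ‖r ^ k‖ := by
    simpa [norm_pow] using summable_geometric_of_lt_one (norm_nonneg r) hr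
  exact ⟨hg.mul_norm hf,
    (hasSum_geometric_of_norm_lt_one hr).mul hs (summable_mul_of_summable_norm hg hf)⟩

section Transfer

variable {R : Type*} [CommRing R]

/-- `(transfer q n).1 / (q³;q³)_n` and `(transfer q n).2 / (q³;q³)_n` are the generating
functions of the strict partitions with `n` parts whose smallest part is odd, resp. even
(or which are empty). -/
def transfer (q : R) : ℕ → R × R
  | 0 => (0, 1)
  | n + 1 => (q ^ (1 + (n + 1) % 2) * (q ^ (3 * n) * (transfer q n).1 + (transfer q n).2),
      q ^ (3 * n + 3) * ((transfer q n).1 + (transfer q n).2))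

def transferSum (q : R) (n : ℕ) : R := (transfer q n).1 + (transfer q n).2

theorem transferSum_add_four (q : R) (m : ℕ) :
    transferSum q (m + 4) =
      -q ^ (3 * (m + 2) + 3) * (1 - q ^ 3) * transferSum q (m + 3)
      + q ^ (3 * (m + 2) + 4) * (1 + q + 2 * q ^ (3 * (m + 2) + 2)) * transferSum q (m + 2)
      - q ^ (6 * (m + 2) + 3) * (1 - q ^ 3) * (1 - q ^ (3 * (m + 2))) * transferSum q (m + 1)
      - q ^ (6 * (m + 2) + 3) * (1 - q ^ (3 * (m + 2))) * (1 - q ^ (3 * (m + 2) - 3)) *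
        transferSum q m := by
  rw [show 3 * (m + 2) - 3 = 3 * m + 3 by omega]
  simp only [transferSum, transfer]
  rcases Nat.mod_two_eq_zero_or_one m with hm | hm
  · rw [show (m + 1) % 2 = 1 by omega, show (m + 1 + 1) % 2 = 0 by omega,
      show (m + 2 + 1) % 2 = 1 by omega, show (m + 3 + 1) % 2 = 0 by omega]
    ring
  · rw [show (m + 1) % 2 = 0 by omega, show (m + 1 + 1) % 2 = 1 by omega,
      show (m + 2 + 1) % 2 = 0 by omega, show (m + 3 + 1) % 2 = 1 by omega]
    ring

theorem aeval_eq_transferSum (q : R) (c : ℤ → ℤ[X])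
    (hcm2 : c (-2) = 0) (hcm1 : c (-1) = 0) (hc0 : c 0 = 1) (hc1 : c 1 = X ^ 2 + X ^ 3)
    (hrec : ∀ n : ℕ, c ((n : ℤ) + 2) =
      -X ^ (3 * n + 3) * (1 - X ^ 3) * c ((n : ℤ) + 1)
      + X ^ (3 * n + 4) * (1 + X + 2 * X ^ (3 * n + 2)) * c (n : ℤ)
      - X ^ (6 * n + 3) * (1 - X ^ 3) * (1 - X ^ (3 * n)) * c ((n : ℤ) - 1)
      - X ^ (6 * n + 3) * (1 - X ^ (3 * n)) * (1 - X ^ (3 * n - 3)) * c ((n : ℤ) - 2))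
    (n : ℕ) : aeval q (c n) = transferSum q n := by
  have hrec' (k : ℕ) := congrArg (aeval q) (hrec k)
  simp only [map_add, map_sub, map_mul, map_neg, map_pow, map_one, map_ofNat, aeval_X]
    at hrec'
  induction n using Nat.strong_induction_on with
  | _ n ih =>
    match n, ih with
    | 0, _ => simp [hc0, transferSum, transfer]
    | 1, _ => simp [hc1, transferSum, transfer]
    | 2, _ =>
      have h := hrec' 0
      norm_num [hcm1, hcm2, hc0, hc1] at h
      norm_num [h, transferSum, transfer]
      ring
    | 3, ih =>
      have h := hrec' 1
      norm_num [hcm1, hc0, hc1] at h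
      have h2 : aeval q (c 2) = transferSum q 2 := mod_cast ih 2 (by omega)
      norm_num [h, h2, transferSum, transfer]
      ring
    | m + 4, ih =>
      have h := hrec' (m + 2)
      rw [show ((m + 2 : ℕ) : ℤ) + 2 = (m + 4 : ℕ) by push_cast; ring,
        show ((m + 2 : ℕ) : ℤ) + 1 = (m + 3 : ℕ) by push_cast; ring,
        show ((m + 2 : ℕ) : ℤ) - 1 = (m + 1 : ℕ) by push_cast; ring,
        show ((m + 2 : ℕ) : ℤ) - 2 = m by push_cast; ring] at h
      rw [h, ih m (by omega), ih (m + 1) (by omega), ih (m + 2) (by omega),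
        ih (m + 3) (by omega), transferSum_add_four]

end Transfer

namespace StrictPartition

theorem rowResidueCount_two (j p : ℕ) : rowResidueCount 2 j p = (p + (j + 1) % 2) / 2 := by
  induction p with
  | zero => simp [rowResidueCount]
  | succ p ih =>
    rw [rowResidueCount, ← Finset.insert_Icc_right_eq_Icc_add_one (by omega),
      Finset.filter_insert]
    have hp : p + 1 ∉ Finset.filter (fun k => (k + j + 1 + 2) % 2 = 0) (Finset.Icc 1 p) := by
      simp
    split_ifs
    · rw [Finset.card_insert_of_notMem hp, ← rowResidueCount, ih]; omega
    · rw [← rowResidueCount, ih]; omega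

def rowWeight (j p : ℕ) : ℕ := p + (p + (j + 1) % 2) / 2

/-- `|λ|₂` read off the parts in increasing order: the head `p` is the last row, whose
`0`-based index is `P.length`. -/
def ascWeight : List ℕ → ℕ
  | [] => 0
  | p :: P => ascWeight P + rowWeight P.length p

theorem wt_two_eq_ascWeight (l : StrictPartition) : l.wt 2 = ascWeight l.parts.reverse := by
  suffices ∀ L : List ℕ, L.sum + ∑ j ∈ Finset.range L.length, rowResidueCount 2 j (L.getD j 0) =
      ascWeight L.reverse from this l.parts
  intro L
  induction L using List.reverseRecOn with
  | nil => rfl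
  | append_singleton L p ih =>
    have hget : ∀ j ∈ Finset.range L.length,
        rowResidueCount 2 j ((L ++ [p]).getD j 0) = rowResidueCount 2 j (L.getD j 0) :=
      fun j hj => by rw [List.getD_append _ _ _ _ (Finset.mem_range.mp hj)]
    rw [List.reverse_append, List.reverse_singleton, List.singleton_append, ascWeight,
      List.length_reverse, ← ih, List.sum_append, List.length_append, List.length_singleton,
      Finset.sum_range_succ, Finset.sum_congr rfl hget, List.getD_append_right _ _ _ _ le_rfl,
      Nat.sub_self, List.getD_cons_zero, rowWeight, rowResidueCount_two]
    simp only [List.sum_singleton]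
    ring

def headParity (P : List ℕ) : ℕ := P.headD 0 % 2

/-- `2 * ((p + headParity P) / 2)` is the least even `s` for which `p :: P.map (· + s)` is
strictly increasing, whenever `P` is a strictly increasing list of positive integers. -/
def consShift (p : ℕ) (P : List ℕ) : List ℕ := p :: P.map (· + 2 * ((p + headParity P) / 2))

theorem headParity_lt_two (P : List ℕ) : headParity P < 2 := Nat.mod_lt _ two_pos

theorem headParity_map_add (P : List ℕ) (t : ℕ) :
    headParity (P.map (· + 2 * t)) = headParity P := by
  cases P <;> simp [headParity]

theorem headParity_map_sub (P : List ℕ) (t : ℕ) (h : ∀ x ∈ P, 2 * t ≤ x) :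
    headParity (P.map (· - 2 * t)) = headParity P := by
  cases P with
  | nil => rfl
  | cons x P => have := h x (by simp); simp [headParity]; omega

theorem headParity_consShift (p : ℕ) (P : List ℕ) : headParity (consShift p P) = p % 2 := rfl

theorem ascWeight_map_add (P : List ℕ) (t : ℕ) :
    ascWeight (P.map (· + 2 * t)) = ascWeight P + 3 * t * P.length := by
  induction P with
  | nil => rfl
  | cons p P ih =>
    have hrow : rowWeight P.length (p + 2 * t) = rowWeight P.length p + 3 * t := by
      simp only [rowWeight]; omega
    simp only [List.map_cons, ascWeight, ih, List.length_map, List.length_cons, hrow]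
    ring

theorem ascWeight_consShift (p : ℕ) (P : List ℕ) :
    ascWeight (consShift p P) =
      ascWeight P + 3 * ((p + headParity P) / 2) * P.length + rowWeight P.length p := by
  rw [consShift, ascWeight, ascWeight_map_add, List.length_map]

theorem consShift_pairwise {p : ℕ} {P : List ℕ} (hp : 0 < p) (hP : (0 :: P).Pairwise (· < ·)) :
    (0 :: consShift p P).Pairwise (· < ·) := by
  cases P with
  | nil => simpa [consShift]
  | cons e P =>
    simp only [List.pairwise_cons, List.mem_cons, forall_eq_or_imp] at hP
    obtain ⟨⟨he, hpos⟩, hlt, hP⟩ := hP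
    simp only [consShift, headParity, List.map_cons, List.headD_cons, List.pairwise_cons,
      List.mem_cons, List.mem_map, forall_eq_or_imp, forall_exists_index, and_imp,
      forall_apply_eq_imp_iff₂, List.pairwise_map]
    refine ⟨⟨hp, by omega, fun x hx => by have := hpos x hx; omega⟩,
      ⟨by omega, fun x hx => by have := hlt x hx; omega⟩,
      fun x hx => by have := hlt x hx; omega, hP.imp (by omega)⟩

theorem shift_lt_of_pairwise {p : ℕ} {P : List ℕ} (h : (0 :: p :: P).Pairwise (· < ·)) :
    ∀ x ∈ P, 2 * ((p + headParity P) / 2) < x := by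
  cases P with
  | nil => simp
  | cons e P =>
    simp only [List.pairwise_cons, List.mem_cons, forall_eq_or_imp] at h
    obtain ⟨-, ⟨hpe, -⟩, heP, -⟩ := h
    simp only [headParity, List.headD_cons, List.mem_cons, forall_eq_or_imp]
    exact ⟨by omega, fun x hx => by have := heP x hx; omega⟩

theorem map_sub_pairwise {p : ℕ} {P : List ℕ} (h : (0 :: p :: P).Pairwise (· < ·)) :
    (0 :: P.map (· - 2 * ((p + headParity P) / 2))).Pairwise (· < ·) := by
  have hlt := shift_lt_of_pairwise h
  have hP : P.Pairwise (· < ·) := (List.pairwise_cons.mp h).2.of_cons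
  simp only [List.pairwise_cons, List.mem_map, forall_exists_index, and_imp,
    forall_apply_eq_imp_iff₂, List.pairwise_map]
  exact ⟨fun x hx => by have := hlt x hx; omega,
    hP.imp_of_mem fun hx _ hxy => by have := hlt _ hx; omega⟩

/-- Strict partitions with `n` parts, listed in increasing order; the leading `0` in the
`Pairwise` condition makes the parts positive. -/
def AscPartition (n : ℕ) : Type := {P : List ℕ // P.length = n ∧ (0 :: P).Pairwise (· < ·)}

def consShiftEquiv (n : ℕ) : ℕ × AscPartition n ≃ AscPartition (n + 1) where
  toFun x := ⟨consShift (x.1 + 1) x.2.1, by simp [consShift, x.2.2.1],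
    consShift_pairwise (Nat.succ_pos _) x.2.2.2⟩
  invFun
    | ⟨[], hlen, _⟩ => absurd hlen (by simp)
    | ⟨p :: P, hlen, h⟩ => (p - 1, ⟨P.map (· - 2 * ((p + headParity P) / 2)),
        by simpa using hlen, map_sub_pairwise h⟩)
  left_inv := by
    rintro ⟨k, P, hlen, hP⟩
    simp only [consShift, headParity_map_add, List.map_map, Nat.add_sub_cancel]
    congr
    ext x
    simp
  right_inv := by
    rintro ⟨_ | ⟨p, P⟩, hlen, h⟩
    · simp at hlen
    have hlt := shift_lt_of_pairwise h
    have hp : 0 < p := (List.pairwise_cons.mp h).1 p (by simp)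
    apply Subtype.ext
    simp only [consShift, Nat.sub_add_cancel hp,
      headParity_map_sub P _ fun x hx => (hlt x hx).le, List.map_map]
    congr
    conv_rhs => rw [← List.map_id P]
    exact List.map_congr_left fun x hx => by
      have := hlt x hx
      simp only [Function.comp_apply, id]
      omega

def ascEquiv (n : ℕ) : {l : StrictPartition // l.length = n} ≃ AscPartition n where
  toFun l := ⟨l.1.parts.reverse, by simpa [length] using l.2,
    List.pairwise_cons.mpr ⟨fun x hx => l.1.pos x (List.mem_reverse.mp hx),
      List.pairwise_reverse.mpr l.1.sorted⟩⟩
  invFun P := ⟨⟨P.1.reverse, List.pairwise_reverse.mpr (List.pairwise_cons.mp P.2.2).2,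
    fun x hx => (List.pairwise_cons.mp P.2.2).1 x (List.mem_reverse.mp hx)⟩,
    by simpa [length] using P.2.1⟩
  left_inv l := by simp
  right_inv P := Subtype.ext P.1.reverse_reverse

section GeneratingFunction

variable {𝕜 : Type*} [NormedField 𝕜]

def markedTerm (a q : 𝕜) (P : List ℕ) : 𝕜 := a ^ headParity P * q ^ ascWeight P

theorem markedTerm_consShift_odd (a q : 𝕜) (j : ℕ) (P : List ℕ) :
    markedTerm a q (consShift (2 * j + 1) P) = (q ^ 3 * (q ^ 3) ^ P.length) ^ j *
      (a * q ^ (1 + (P.length + 1) % 2) * markedTerm (q ^ (3 * P.length)) q P) := by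
  have hh := headParity_lt_two P
  have hhalf : (2 * j + 1 + headParity P) / 2 = j + headParity P := by omega
  have hrow : rowWeight P.length (2 * j + 1) = 3 * j + (1 + (P.length + 1) % 2) := by
    simp only [rowWeight]; omega
  simp only [markedTerm, headParity_consShift, ascWeight_consShift, hhalf, hrow]
  rw [show (2 * j + 1) % 2 = 1 by omega]
  ring

theorem markedTerm_consShift_even (a q : 𝕜) (j : ℕ) (P : List ℕ) :
    markedTerm a q (consShift (2 * j + 1 + 1) P) = (q ^ 3 * (q ^ 3) ^ P.length) ^ j *
      (q ^ 3 * (q ^ 3) ^ P.length * markedTerm 1 q P) := by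
  have hh := headParity_lt_two P
  have hhalf : (2 * j + 1 + 1 + headParity P) / 2 = j + 1 := by omega
  have hrow : rowWeight P.length (2 * j + 1 + 1) = 3 * j + 3 := by
    simp only [rowWeight]; omega
  simp only [markedTerm, headParity_consShift, ascWeight_consShift, hhalf, hrow]
  rw [show (2 * j + 1 + 1) % 2 = 0 by omega]
  ring

variable [CompleteSpace 𝕜]

theorem hasSum_markedTerm {q : 𝕜} (hq : ‖q‖ < 1) (n : ℕ) (a : 𝕜) :
    (Summable fun P : AscPartition n => ‖markedTerm a q P.1‖) ∧
      HasSum (fun P : AscPartition n => markedTerm a q P.1)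
        ((a * (transfer q n).1 + (transfer q n).2) /
          ∏ j ∈ Finset.range n, (1 - q ^ 3 * (q ^ 3) ^ j)) := by
  induction n generalizing a with
  | zero =>
    let nil : AscPartition 0 := ⟨[], rfl, by simp⟩
    have hnil (P : AscPartition 0) : P = nil := Subtype.ext (List.eq_nil_of_length_eq_zero P.2.1)
    refine ⟨(hasSum_single nil fun P hP => (hP (hnil P)).elim).summable, ?_⟩
    convert hasSum_single nil fun P hP => (hP (hnil P)).elim
    simp [nil, markedTerm, headParity, ascWeight, transfer]
  | succ n ih =>
    have hr : ‖q ^ 3 * (q ^ 3) ^ n‖ < 1 := by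
      rw [← pow_succ', norm_pow, norm_pow]
      exact pow_lt_one₀ (by positivity) (pow_lt_one₀ (norm_nonneg q) hq (by omega)) (by omega)
    -- the smallest part `2 * j + 1` or `2 * j + 2` is encoded by `inl (j, _)`, resp. `inr (j, _)`
    let e : (ℕ × AscPartition n) ⊕ (ℕ × AscPartition n) ≃ AscPartition (n + 1) :=
      (Equiv.sumProdDistrib _ _ _).symm.trans
        ((Equiv.prodCongr Equiv.natSumNatEquivNat (Equiv.refl _)).trans (consShiftEquiv n))
    have hodd (x : ℕ × AscPartition n) : markedTerm a q (e (.inl x)).1 =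
        (q ^ 3 * (q ^ 3) ^ n) ^ x.1 *
          (a * q ^ (1 + (n + 1) % 2) * markedTerm (q ^ (3 * n)) q x.2.1) := by
      have : (e (.inl x)).1 = consShift (2 * x.1 + 1) x.2.1 := rfl
      rw [this, markedTerm_consShift_odd, x.2.2.1]
    have heven (x : ℕ × AscPartition n) : markedTerm a q (e (.inr x)).1 =
        (q ^ 3 * (q ^ 3) ^ n) ^ x.1 * (q ^ 3 * (q ^ 3) ^ n * markedTerm 1 q x.2.1) := by
      have : (e (.inr x)).1 = consShift (2 * x.1 + 1 + 1) x.2.1 := rfl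
      rw [this, markedTerm_consShift_even, x.2.2.1]
    obtain ⟨hS₁, hH₁⟩ := hasSum_geometric_mul_of_summable_norm hr
      (((ih (q ^ (3 * n))).1.mul_left _).congr fun _ => (norm_mul _ _).symm)
      ((ih (q ^ (3 * n))).2.mul_left (a * q ^ (1 + (n + 1) % 2)))
    obtain ⟨hS₂, hH₂⟩ := hasSum_geometric_mul_of_summable_norm hr
      (((ih 1).1.mul_left _).congr fun _ => (norm_mul _ _).symm)
      ((ih 1).2.mul_left (q ^ 3 * (q ^ 3) ^ n))
    refine ⟨e.summable_iff.mp (.sum _ ?_ ?_), e.hasSum_iff.mp ?_⟩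
    · simpa only [Function.comp_def, hodd] using hS₁
    · simpa only [Function.comp_def, heven] using hS₂
    convert HasSum.sum (f := (fun P => markedTerm a q P.1) ∘ e)
      (by simpa only [Function.comp_def, hodd] using hH₁)
      (by simpa only [Function.comp_def, heven] using hH₂) using 1
    simp only [transfer, Finset.prod_range_succ, div_eq_mul_inv, mul_inv]
    ring

theorem hasSum_wt_two {q : 𝕜} (hq : ‖q‖ < 1) (n : ℕ) :
    (Summable fun l : {l : StrictPartition // l.length = n} => ‖q ^ l.1.wt 2‖) ∧
      HasSum (fun l : {l : StrictPartition // l.length = n} => q ^ l.1.wt 2)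
        (transferSum q n / ∏ j ∈ Finset.range n, (1 - q ^ 3 * (q ^ 3) ^ j)) := by
  have hterm (l : {l : StrictPartition // l.length = n}) :
      markedTerm 1 q (ascEquiv n l).1 = q ^ l.1.wt 2 := by
    rw [markedTerm, one_pow, one_mul, wt_two_eq_ascWeight]
    rfl
  obtain ⟨hS, hH⟩ := hasSum_markedTerm hq n 1
  rw [one_mul, ← transferSum] at hH
  exact ⟨by simpa only [Function.comp_def, hterm] using (ascEquiv n).summable_iff.mpr hS,
    by simpa only [Function.comp_def, hterm] using (ascEquiv n).hasSum_iff.mpr hH⟩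

end GeneratingFunction

end StrictPartition

/-- **Fixed-length generating function, `i = 2`.**
For `|q| < 1` and the polynomial sequence `c = c^{(2)}` (indexed by `ℤ`) defined by
`c (-2) = c (-1) = 0`, `c 0 = 1`, `c 1 = q^2 + q^3` and the fourth order recurrence below,
the series `∑_{λ ∈ STR, ℓ(λ) = n} q^{|λ|₂}` converges absolutely and equals
`c n (q) / (q³;q³)_n` for every `n ≥ 0`.
(For `n = 0` the last term of the recurrence vanishes because of the factor `1 - q^{3n}`,
so the truncated natural subtraction in the exponent `3*n - 3` is harmless.) -/
theorem fixed_length_generating_function_two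
    (q : ℂ) (hq : ‖q‖ < 1)
    (c : ℤ → Polynomial ℤ)
    (hcm2 : c (-2) = 0) (hcm1 : c (-1) = 0)
    (hc0 : c 0 = 1) (hc1 : c 1 = X ^ 2 + X ^ 3)
    (hrec : ∀ n : ℕ, c ((n : ℤ) + 2) =
      -X ^ (3 * n + 3) * (1 - X ^ 3) * c ((n : ℤ) + 1)
      + X ^ (3 * n + 4) * (1 + X + 2 * X ^ (3 * n + 2)) * c (n : ℤ)
      - X ^ (6 * n + 3) * (1 - X ^ 3) * (1 - X ^ (3 * n)) * c ((n : ℤ) - 1)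
      - X ^ (6 * n + 3) * (1 - X ^ (3 * n)) * (1 - X ^ (3 * n - 3)) * c ((n : ℤ) - 2)) :
    ∀ n : ℕ,
      Summable (fun p : {p : StrictPartition // p.length = n} => ‖(q : ℂ) ^ p.1.wt 2‖) ∧
      (∑' p : {p : StrictPartition // p.length = n}, q ^ p.1.wt 2) =
        (aeval q (c (n : ℤ))) / ∏ j ∈ Finset.range n, (1 - q ^ 3 * (q ^ 3) ^ j) := by
  intro n
  obtain ⟨hsummable, hsum⟩ := StrictPartition.hasSum_wt_two hq n
  rw [aeval_eq_transferSum q c hcm2 hcm1 hc0 hc1 hrec n]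
  exact ⟨hsummable, hsum.tsum_eq⟩
end
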